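/- arXiv:1102.3518 — 3 statements merged into one kernel-verified Lean document; each statement's English description precedes it below -/
import Mathlib

section
/- If φ : [0,∞) → (0,∞) is continuous and satisfies for all t ≥ 0 the integral equation (1/(β ρ_l)) a^β φ(t)^β + ∫₀ᵗ a^γ φ(s)^γ ds = (1/(β ρ_l)) a^β φ(0)^β, then for all t ≥ 0, φ(t) = φ(0) · ( (γ−β) ρ_l a^{γ−β} φ(0)^{γ−β} t + 1 )^{−1/(γ−β)}. -/
open MeasureTheory Set Filter Real

theorem stmt4
    (ρl β γ a : ℝ) (hρl : 0 < ρl) (hβ : 0 < β) (hβγ : β < γ) (ha : 0 < a)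
    (φ : ℝ → ℝ) (hφcont : ContinuousOn φ (Ici 0))
    (hφpos : ∀ t ∈ Ici (0:ℝ), 0 < φ t)
    (heq : ∀ t ∈ Ici (0:ℝ),
      (1 / (β * ρl)) * (a ^ β * φ t ^ β) + (∫ s in (0:ℝ)..t, a ^ γ * φ s ^ γ)
        = (1 / (β * ρl)) * (a ^ β * φ 0 ^ β)) :
    ∀ t ∈ Ici (0:ℝ),
      φ t = φ 0 * ((γ - β) * ρl * a ^ (γ - β) * φ 0 ^ (γ - β) * t + 1) ^ (-(1 / (γ - β))) := by
  have hβρl : (0:ℝ) < β * ρl := mul_pos hβ hρl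
  have haβ : (0:ℝ) < a ^ β := Real.rpow_pos_of_pos ha β
  have haγβ : (0:ℝ) < a ^ (γ - β) := Real.rpow_pos_of_pos ha (γ - β)
  set c : ℝ := ρl * a ^ (γ - β) with hc
  have hcpos : 0 < c := mul_pos hρl haγβ
  have hγβ : (0:ℝ) < γ - β := sub_pos.mpr hβγ
  have hφγ : ContinuousOn (fun s => φ s ^ γ) (Ici 0) :=
    hφcont.rpow_const (fun x hx => Or.inl (ne_of_gt (hφpos x hx)))
  -- the integral equation rewritten
  have hInt : ∀ t ∈ Ici (0:ℝ),
      φ t ^ β = φ 0 ^ β - (β * c) * ∫ s in (0:ℝ)..t, φ s ^ γ := by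
    intro t ht
    have h := heq t ht
    have hpull : (∫ s in (0:ℝ)..t, a ^ γ * φ s ^ γ)
        = a ^ γ * ∫ s in (0:ℝ)..t, φ s ^ γ := intervalIntegral.integral_const_mul _ _
    rw [hpull] at h
    have haa : a ^ γ = a ^ β * a ^ (γ - β) := by
      rw [← Real.rpow_add ha]; ring_nf
    rw [haa] at h
    have hβρl' : β * ρl ≠ 0 := ne_of_gt hβρl
    have haβ' : a ^ β ≠ 0 := ne_of_gt haβ
    have key : a ^ β * (φ t ^ β) = a ^ β * (φ 0 ^ β - (β * c) * ∫ s in (0:ℝ)..t, φ s ^ γ) := by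
      field_simp at h
      rw [hc]
      nlinarith [h]
    exact mul_left_cancel₀ haβ' key
  -- integrability
  have hIcc : ∀ t ∈ Ici (0:ℝ), IntervalIntegrable (fun s => φ s ^ γ) volume 0 t := by
    intro t ht
    apply ContinuousOn.intervalIntegrable
    apply hφγ.mono
    rw [uIcc_of_le ht]
    exact Icc_subset_Ici_self
  -- right derivative of the integral
  have hFTC : ∀ x ∈ Ici (0:ℝ),
      HasDerivWithinAt (fun t => ∫ s in (0:ℝ)..t, φ s ^ γ) (φ x ^ γ) (Ici x) x := by
    intro x hx
    have hsub : Ioi x ⊆ Ici (0:ℝ) := fun y hy => mem_Ici.mpr (le_trans (mem_Ici.mp hx) (le_of_lt hy))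
    refine intervalIntegral.integral_hasDerivWithinAt_right (hIcc x hx)
      ⟨Ici 0, ?_, (hφγ.aestronglyMeasurable measurableSet_Ici)⟩ ?_
    · exact mem_of_superset self_mem_nhdsWithin hsub
    · exact ((hφγ x hx).mono hsub)
  -- derivative of t ↦ φ t ^ (β - γ) within Ici x equals (γ-β)*c
  have hu : ∀ x ∈ Ici (0:ℝ),
      HasDerivWithinAt (fun t => φ t ^ (β - γ)) ((γ - β) * c) (Ici x) x := by
    intro x hx
    have hφx : 0 < φ x := hφpos x hx
    set g : ℝ → ℝ := fun t => φ 0 ^ β - (β * c) * ∫ s in (0:ℝ)..t, φ s ^ γ with hg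
    have hgx : g x = φ x ^ β := (hInt x hx).symm
    have hgderiv : HasDerivWithinAt g (-(β * c * φ x ^ γ)) (Ici x) x := by
      have h1 := ((hFTC x hx).const_mul (β * c)).const_sub (φ 0 ^ β)
      convert h1 using 1
    have hgxne : g x ≠ 0 := by rw [hgx]; exact ne_of_gt (Real.rpow_pos_of_pos hφx β)
    have hG : HasDerivWithinAt (fun t => g t ^ ((β - γ)/β))
        ((-(β * c * φ x ^ γ)) * ((β - γ)/β) * g x ^ ((β - γ)/β - 1)) (Ici x) x :=
      hgderiv.rpow_const (Or.inl hgxne)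
    have hval : (-(β * c * φ x ^ γ)) * ((β - γ)/β) * g x ^ ((β - γ)/β - 1) = (γ - β) * c := by
      rw [hgx, ← Real.rpow_mul hφx.le]
      have hβe : β * ((β - γ)/β - 1) = -γ := by field_simp; ring
      rw [hβe]
      have hone : φ x ^ γ * φ x ^ (-γ) = 1 := by
        rw [← Real.rpow_add hφx]; simp
      have h3 : (-(β * c * φ x ^ γ)) * ((β - γ)/β) * φ x ^ (-γ)
          = (γ - β) * c * (φ x ^ γ * φ x ^ (-γ)) := by
        field_simp; ring
      rw [h3, hone, mul_one]
    rw [hval] at hG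
    refine hG.congr (fun y hy => ?_) ?_
    · have hy0 : y ∈ Ici (0:ℝ) := mem_Ici.mpr (le_trans (mem_Ici.mp hx) (mem_Ici.mp hy))
      have hφy : 0 < φ y := hφpos y hy0
      have hgy : g y = φ y ^ β := (hInt y hy0).symm
      rw [hgy, ← Real.rpow_mul hφy.le]
      congr 1
      field_simp
    · rw [hgx, ← Real.rpow_mul hφx.le]
      congr 1
      field_simp
  -- linearity of φ^(β-γ)
  have hlin : ∀ T ∈ Ici (0:ℝ), φ T ^ (β - γ) = φ 0 ^ (β - γ) + (γ - β) * c * T := by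
    intro T hT
    have hucont : ContinuousOn (fun t => φ t ^ (β - γ)) (Icc 0 T) :=
      (hφcont.rpow_const (fun x hx => Or.inl (ne_of_gt (hφpos x hx)))).mono Icc_subset_Ici_self
    have hlincont : ContinuousOn (fun t => φ 0 ^ (β - γ) + (γ - β) * c * t) (Icc 0 T) := by
      fun_prop
    have hlinD : ∀ x : ℝ, HasDerivAt (fun t => φ 0 ^ (β - γ) + (γ - β) * c * t) ((γ - β) * c) x := by
      intro x
      simpa using ((hasDerivAt_id x).const_mul ((γ - β) * c)).const_add (φ 0 ^ (β - γ))
    have := eq_of_has_deriv_right_eq (f' := fun _ => (γ - β) * c)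
      (fun x hx => hu x (mem_Ici.mpr hx.1))
      (fun x _ => (hlinD x).hasDerivWithinAt)
      hucont hlincont (by norm_num)
    simpa using this T ⟨hT, le_refl T⟩
  -- final algebra
  intro t ht
  have hφ0 : 0 < φ 0 := hφpos 0 self_mem_Ici
  have hφt : 0 < φ t := hφpos t ht
  have hK : (γ - β) * ρl * a ^ (γ - β) * φ 0 ^ (γ - β) * t + 1
      = φ 0 ^ (γ - β) * φ t ^ (β - γ) := by
    rw [hlin t ht]
    have h1 : φ 0 ^ (γ - β) * φ 0 ^ (β - γ) = 1 := by
      rw [← Real.rpow_add hφ0]; norm_num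
    rw [mul_add, h1, hc]; ring
  have h2 : φ 0 ^ (γ - β) * φ t ^ (β - γ) = (φ 0 / φ t) ^ (γ - β) := by
    rw [Real.div_rpow hφ0.le hφt.le]
    have hbg : β - γ = -(γ - β) := by ring
    rw [hbg, Real.rpow_neg hφt.le, div_eq_mul_inv]
  rw [hK, h2, ← Real.rpow_mul (le_of_lt (div_pos hφ0 hφt))]
  have hm1 : (γ - β) * -(1 / (γ - β)) = -1 := by field_simp
  rw [hm1, Real.rpow_neg_one, inv_div]
  field_simp
end

section
/- If φ : [0,∞) → (0,∞) is continuous and satisfies for all t ≥ 0 the integral equation (1/(β ρ_l)) a^β φ(t)^β + ∫₀ᵗ a^γ φ(s)^γ ds = (1/(β ρ_l)) a^β φ(0)^β, then there exist constants C₁, C₂ > 0 such that for all t ≥ 0, C₁ (1+t)^{−1/(γ−β)} ≤ φ(t) ≤ C₂ (1+t)^{−1/(γ−β)}. -/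
open MeasureTheory Set Filter Real

theorem stmt5
    (ρl β γ a : ℝ) (hρl : 0 < ρl) (hβ : 0 < β) (hβγ : β < γ) (ha : 0 < a)
    (φ : ℝ → ℝ) (hφcont : ContinuousOn φ (Ici 0))
    (hφpos : ∀ t ∈ Ici (0:ℝ), 0 < φ t)
    (heq : ∀ t ∈ Ici (0:ℝ),
      (1 / (β * ρl)) * (a ^ β * φ t ^ β) + (∫ s in (0:ℝ)..t, a ^ γ * φ s ^ γ)
        = (1 / (β * ρl)) * (a ^ β * φ 0 ^ β)) :
    ∃ C₁ C₂ : ℝ, 0 < C₁ ∧ 0 < C₂ ∧ ∀ t ∈ Ici (0:ℝ),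
      C₁ * (1 + t) ^ (-(1 / (γ - β))) ≤ φ t ∧ φ t ≤ C₂ * (1 + t) ^ (-(1 / (γ - β))) := by
  have hγβ : 0 < γ - β := sub_pos.mpr hβγ
  have hagb : (0:ℝ) < a ^ (γ - β) := Real.rpow_pos_of_pos ha _
  set c : ℝ := β * ρl * a ^ (γ - β) with hc
  have hcpos : 0 < c := by positivity
  set K : ℝ := (γ - β) * ρl * a ^ (γ - β) with hK
  have hKpos : 0 < K := by positivity
  -- globally continuous extension of the integrand
  have hmax : Continuous fun s : ℝ => max s 0 := continuous_id.max continuous_const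
  have hφg : Continuous fun s : ℝ => φ (max s 0) := by
    rw [← continuousOn_univ]
    exact hφcont.comp hmax.continuousOn fun x _ => le_max_right x 0
  set g : ℝ → ℝ := fun s => φ (max s 0) ^ γ with hg
  have hgcont : Continuous g :=
    hφg.rpow_const fun x => Or.inl (ne_of_gt (hφpos _ (le_max_right x 0)))
  have hgpos : ∀ s, 0 < g s := fun s => Real.rpow_pos_of_pos (hφpos _ (le_max_right s 0)) γ
  set J : ℝ → ℝ := fun t => ∫ s in (0:ℝ)..t, g s with hJ
  have hJderiv : ∀ t, HasDerivAt J (g t) t := fun t =>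
    (hgcont.integral_hasStrictDerivAt 0 t).hasDerivAt
  have hJ0 : J 0 = 0 := intervalIntegral.integral_same
  -- the original integral equals a^γ * J t on Ici 0
  have hagree : ∀ t ∈ Ici (0:ℝ),
      (∫ s in (0:ℝ)..t, a ^ γ * φ s ^ γ) = a ^ γ * J t := by
    intro t ht
    rw [hJ, ← intervalIntegral.integral_const_mul]
    apply intervalIntegral.integral_congr
    intro s hs
    rw [uIcc_of_le ht] at hs
    simp [hg, max_eq_left hs.1]
  have haβ : (0:ℝ) < a ^ β := Real.rpow_pos_of_pos ha _
  have haγβ : a ^ γ = a ^ β * a ^ (γ - β) := by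
    rw [← Real.rpow_add ha]; ring_nf
  -- key identity: φ t ^ β = φ 0 ^ β - c * J t
  have h1 : ∀ t ∈ Ici (0:ℝ), φ t ^ β = φ 0 ^ β - c * J t := by
    intro t ht
    have h := heq t ht
    rw [hagree t ht, haγβ] at h
    have hβρ : β * ρl ≠ 0 := by positivity
    apply mul_left_cancel₀ (ne_of_gt haβ)
    field_simp at h
    rw [hc]
    linear_combination a ^ β * h
  set ψ : ℝ → ℝ := fun t => φ 0 ^ β - c * J t with hψ
  have hψderiv : ∀ t, HasDerivAt ψ (-(c * g t)) t := fun t =>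
    ((hJderiv t).const_mul c).const_sub (φ 0 ^ β)
  have hψeq : ∀ t ∈ Ici (0:ℝ), ψ t = φ t ^ β := by
    intro t ht; rw [hψ]; exact (h1 t ht).symm
  have hψpos : ∀ t ∈ Ici (0:ℝ), 0 < ψ t := by
    intro t ht
    rw [hψeq t ht]
    exact Real.rpow_pos_of_pos (hφpos t ht) β
  set e : ℝ := -((γ - β) / β) with he
  set Hfun : ℝ → ℝ := fun t => ψ t ^ e with hH
  have hβe : β * e = -(γ - β) := by rw [he]; field_simp
  -- derivative of Hfun is constantly K on Ici 0
  have hHd : ∀ t ∈ Ici (0:ℝ), HasDerivAt Hfun K t := by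
    intro t ht
    have hd := (hψderiv t).rpow_const (p := e) (Or.inl (ne_of_gt (hψpos t ht)))
    convert hd using 1
    have hgt : g t = φ t ^ γ := by simp [hg, max_eq_left (show (0:ℝ) ≤ t from ht)]
    have hψt : ψ t = φ t ^ β := hψeq t ht
    have hφt := hφpos t ht
    rw [hgt, hψt, ← Real.rpow_mul hφt.le]
    have hprod : φ t ^ γ * φ t ^ (β * (e - 1)) = 1 := by
      rw [← Real.rpow_add hφt]
      have : γ + β * (e - 1) = 0 := by rw [mul_sub, hβe]; ring
      rw [this, Real.rpow_zero]
    have hKe : K = -e * c := by rw [hK, hc, he]; field_simp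
    calc K = -e * c * (φ t ^ γ * φ t ^ (β * (e - 1))) := by rw [hprod, hKe, mul_one]
      _ = -(c * φ t ^ γ) * e * φ t ^ (β * (e - 1)) := by ring
  -- Hfun is affine: Hfun t = Hfun 0 + K * t on Ici 0
  have hlin : ∀ T ∈ Ici (0:ℝ), Hfun T = Hfun 0 + K * T := by
    intro T hT
    have key := constant_of_has_deriv_right_zero
      (f := fun t => Hfun t - K * t) (a := 0) (b := T)
      (fun t ht => (((hHd t ht.1).continuousAt.continuousWithinAt).sub
        ((continuous_const.mul continuous_id).continuousAt.continuousWithinAt)))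
      (fun x hx => by
        have h0 : HasDerivAt (fun t => Hfun t - K * t) (K - K * 1) x :=
          (hHd x hx.1).sub ((hasDerivAt_id x).const_mul K)
        simpa using h0.hasDerivWithinAt)
      T (right_mem_Icc.mpr hT)
    simp only [mul_zero] at key
    linarith
  -- explicit formula for φ
  have hH0 : Hfun 0 = φ 0 ^ (-(γ - β)) := by
    rw [hH]
    simp only [hψ, hJ0, mul_zero, sub_zero]
    rw [← Real.rpow_mul (hφpos 0 self_mem_Ici).le, hβe]
  have hHt : ∀ t ∈ Ici (0:ℝ), Hfun t = φ t ^ (-(γ - β)) := by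
    intro t ht
    rw [hH]
    simp only
    rw [hψeq t ht, ← Real.rpow_mul (hφpos t ht).le, hβe]
  set H0 : ℝ := φ 0 ^ (-(γ - β)) with hH0def
  have hH0pos : 0 < H0 := Real.rpow_pos_of_pos (hφpos 0 self_mem_Ici) _
  have hform : ∀ t ∈ Ici (0:ℝ), φ t ^ (-(γ - β)) = H0 + K * t := by
    intro t ht
    rw [← hHt t ht, hlin t ht, hH0]
  set q : ℝ := -(1 / (γ - β)) with hq
  have hq0 : q ≤ 0 := by rw [hq]; exact neg_nonpos.mpr (by positivity)
  have hφform : ∀ t ∈ Ici (0:ℝ), φ t = (H0 + K * t) ^ q := by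
    intro t ht
    have h2 : (φ t ^ (-(γ - β))) ^ q = φ t := by
      rw [← Real.rpow_mul (hφpos t ht).le]
      have : -(γ - β) * q = 1 := by rw [hq]; field_simp
      rw [this, Real.rpow_one]
    rw [← h2, hform t ht]
  set m : ℝ := min H0 K with hm
  set M : ℝ := max H0 K with hM
  have hmpos : 0 < m := lt_min hH0pos hKpos
  have hMpos : 0 < M := lt_of_lt_of_le hH0pos (le_max_left _ _)
  refine ⟨M ^ q, m ^ q, Real.rpow_pos_of_pos hMpos q, Real.rpow_pos_of_pos hmpos q, ?_⟩
  intro t ht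
  have ht0 : (0:ℝ) ≤ t := ht
  have h1t : (0:ℝ) < 1 + t := by linarith
  have hml : m * (1 + t) ≤ H0 + K * t := by
    have h1 := min_le_left H0 K
    have h2 := min_le_right H0 K
    nlinarith
  have hMr : H0 + K * t ≤ M * (1 + t) := by
    have h1 := le_max_left H0 K
    have h2 := le_max_right H0 K
    nlinarith
  have hsumpos : 0 < H0 + K * t := by positivity
  have hmul : 0 < m * (1 + t) := by positivity
  rw [hφform t ht]
  constructor
  · have := Real.rpow_le_rpow_of_nonpos hsumpos hMr hq0
    rwa [Real.mul_rpow hMpos.le h1t.le] at this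
  · have := Real.rpow_le_rpow_of_nonpos hmul hml hq0
    rwa [Real.mul_rpow hmpos.le h1t.le] at this
end

section
/- Let 0 < β < k and let f : [0,1] → [0,∞) be a function such that x ↦ f(x)^β is continuously differentiable on [0,1]. Then for every x ∈ [0,1]: f(x)^k ≤ f(0)^k + (k/β) (∫₀¹ f(y)^{2k−2β} dy)^{1/2} (∫₀¹ ((f^β)′(y))² dy)^{1/2}. -/
open MeasureTheory Set Filter Real

theorem stmt19
    (β k : ℝ) (hβ : 0 < β) (hβk : β < k)
    (f : ℝ → ℝ) (hf : ∀ x ∈ Icc (0:ℝ) 1, 0 ≤ f x)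
    (fb' : ℝ → ℝ)
    (hder : ∀ x ∈ Icc (0:ℝ) 1, HasDerivWithinAt (fun y => f y ^ β) (fb' x) (Icc 0 1) x)
    (hcont : ContinuousOn fb' (Icc 0 1)) :
    ∀ x ∈ Icc (0:ℝ) 1,
      f x ^ k ≤ f 0 ^ k + (k / β) *
        (∫ y in (0:ℝ)..1, f y ^ (2 * k - 2 * β)) ^ ((1:ℝ) / 2) *
        (∫ y in (0:ℝ)..1, (fb' y) ^ 2) ^ ((1:ℝ) / 2) := by
  intro x hx
  set g : ℝ → ℝ := fun y => f y ^ β with hg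
  have hk : 0 < k := hβ.trans hβk
  have hβ0 : β ≠ 0 := hβ.ne'
  have hkb1 : 1 ≤ k / β := by
    rw [le_div_iff₀ hβ]; linarith
  have hkb0 : 0 < k / β := div_pos hk hβ
  have hgc : ContinuousOn g (Icc 0 1) := fun y hy => (hder y hy).continuousWithinAt
  have hgnn : ∀ y ∈ Icc (0:ℝ) 1, 0 ≤ g y := fun y hy => Real.rpow_nonneg (hf y hy) _
  -- the derivative integrand
  set h : ℝ → ℝ := fun y => k / β * (g y ^ (k / β - 1) * fb' y) with hh
  have hhc : ContinuousOn h (Icc 0 1) := by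
    apply continuousOn_const.mul
    exact (hgc.rpow_const (fun y hy => Or.inr (by linarith))).mul hcont
  -- F := g ^ (k/β) agrees with f ^ k on Icc 0 1
  set F : ℝ → ℝ := fun y => g y ^ (k / β) with hF
  have hFeq : ∀ y ∈ Icc (0:ℝ) 1, F y = f y ^ k := by
    intro y hy
    rw [hF, hg]
    simp only
    rw [← Real.rpow_mul (hf y hy), mul_div_cancel₀ _ hβ0]
  have hFc : ContinuousOn F (Icc 0 1) :=
    hgc.rpow_const (fun y hy => Or.inr (by positivity))
  have hFder : ∀ y ∈ Icc (0:ℝ) 1, HasDerivWithinAt F (h y) (Icc 0 1) y := by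
    intro y hy
    have := (Real.hasDerivAt_rpow_const (x := g y) (p := k / β)
      (Or.inr hkb1)).comp_hasDerivWithinAt y (hder y hy)
    exact this.congr_deriv (by simp only [hh]; ring)
  -- FTC on [0, x]
  have hx0 : (0:ℝ) ≤ x := hx.1
  have hx1 : x ≤ 1 := hx.2
  have hsub : Icc (0:ℝ) x ⊆ Icc 0 1 := Icc_subset_Icc le_rfl hx1
  have huIcc : uIcc (0:ℝ) 1 = Icc 0 1 := uIcc_of_le zero_le_one
  have hint : IntervalIntegrable h volume 0 x := by
    apply (hhc.mono ?_).intervalIntegrable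
    rw [uIcc_of_le hx0]; exact hsub
  have ftc : ∫ y in (0:ℝ)..x, h y = F x - F 0 := by
    apply intervalIntegral.integral_eq_sub_of_hasDeriv_right_of_le hx0
      (hFc.mono hsub) _ hint
    intro y hy
    have hy' : y ∈ Icc (0:ℝ) 1 := ⟨hy.1.le, hy.2.le.trans hx1⟩
    exact (hFder y hy').mono_of_mem_nhdsWithin
      (Icc_mem_nhdsGT_of_mem ⟨hy.1.le, hy.2.trans_le hx1⟩)
  -- pass to absolute values and extend to [0,1]
  have habs : ContinuousOn (fun y => |h y|) (Icc 0 1) := hhc.abs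
  have hint1 : IntervalIntegrable (fun y => |h y|) volume 0 1 :=
    (huIcc ▸ habs).intervalIntegrable
  have step1 : ∫ y in (0:ℝ)..x, h y ≤ ∫ y in (0:ℝ)..1, |h y| := by
    calc ∫ y in (0:ℝ)..x, h y ≤ ∫ y in (0:ℝ)..x, |h y| := by
          apply intervalIntegral.integral_mono_on hx0 hint
            (hint1.mono_set (by rw [uIcc_of_le hx0, huIcc]; exact hsub))
          intro y _; exact le_abs_self _
      _ ≤ ∫ y in (0:ℝ)..1, |h y| := by
          apply intervalIntegral.integral_mono_interval le_rfl hx0 hx1 _ hint1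
          filter_upwards with y using abs_nonneg _
  -- Hölder / Cauchy-Schwarz on [0,1]
  set μ : Measure ℝ := volume.restrict (Ioc 0 1) with hμ
  have hIcc : ∀ᵐ y ∂μ, y ∈ Icc (0:ℝ) 1 := by
    filter_upwards [(ae_restrict_iff' measurableSet_Ioc).2
      (Filter.Eventually.of_forall fun y (hy : y ∈ Ioc (0:ℝ) 1) => hy)] with y hy
    exact ⟨hy.1.le, hy.2⟩
  set F1 : ℝ → ℝ := fun y => g y ^ (k / β - 1) with hF1
  have hF1c : ContinuousOn F1 (Icc 0 1) :=
    hgc.rpow_const (fun y hy => Or.inr (by linarith))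
  have hF1eq : ∀ y ∈ Icc (0:ℝ) 1, F1 y = f y ^ (k - β) := by
    intro y hy
    rw [hF1, hg]; simp only
    rw [← Real.rpow_mul (hf y hy)]
    congr 1
    field_simp
  have hF1nn : ∀ᵐ y ∂μ, 0 ≤ F1 y := by
    filter_upwards [hIcc] with y hy
    exact Real.rpow_nonneg (hgnn y hy) _
  have hF2c : ContinuousOn (fun y => |fb' y|) (Icc 0 1) := hcont.abs
  have hm1 : AEStronglyMeasurable F1 μ :=
    (hF1c.mono Ioc_subset_Icc_self).aestronglyMeasurable measurableSet_Ioc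
  have hm2 : AEStronglyMeasurable (fun y => |fb' y|) μ :=
    (hF2c.mono Ioc_subset_Icc_self).aestronglyMeasurable measurableSet_Ioc
  obtain ⟨C1, hC1⟩ := isCompact_Icc.exists_bound_of_continuousOn hF1c
  obtain ⟨C2, hC2⟩ := isCompact_Icc.exists_bound_of_continuousOn hF2c
  have hmem1 : MemLp F1 (ENNReal.ofReal 2) μ := by
    apply MemLp.of_bound hm1 C1
    filter_upwards [hIcc] with y hy using hC1 y hy
  have hmem2 : MemLp (fun y => |fb' y|) (ENNReal.ofReal 2) μ := by
    apply MemLp.of_bound hm2 C2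
    filter_upwards [hIcc] with y hy using hC2 y hy
  have hconj : Real.HolderConjugate 2 2 := Real.holderConjugate_iff.mpr ⟨one_lt_two, by norm_num⟩
  have hold := integral_mul_le_Lp_mul_Lq_of_nonneg hconj hF1nn
    (Filter.Eventually.of_forall fun y => abs_nonneg _) hmem1 hmem2
  -- identify the integrals
  have eqL : ∫ y in (0:ℝ)..1, |h y| = k / β * ∫ a, F1 a * |fb' a| ∂μ := by
    rw [intervalIntegral.integral_of_le zero_le_one, ← hμ, ← integral_const_mul]
    apply integral_congr_ae
    filter_upwards [hIcc] with y hy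
    have h1 : 0 ≤ g y ^ (k / β - 1) := Real.rpow_nonneg (hgnn y hy) _
    rw [hh]; simp only
    rw [abs_mul, abs_mul, abs_of_pos hkb0, abs_of_nonneg h1]
  have eqA : ∫ a, F1 a ^ (2:ℝ) ∂μ = ∫ y in (0:ℝ)..1, f y ^ (2 * k - 2 * β) := by
    rw [intervalIntegral.integral_of_le zero_le_one, ← hμ]
    apply integral_congr_ae
    filter_upwards [hIcc] with y hy
    rw [hF1eq y hy, ← Real.rpow_mul (hf y hy)]
    congr 1
    ring
  have eqB : ∫ a, |fb' a| ^ (2:ℝ) ∂μ = ∫ y in (0:ℝ)..1, (fb' y) ^ 2 := by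
    rw [intervalIntegral.integral_of_le zero_le_one, ← hμ]
    apply integral_congr_ae
    filter_upwards with y
    rw [show (2:ℝ) = ((2:ℕ):ℝ) by norm_num, Real.rpow_natCast, sq_abs]
  -- assemble
  have h20 : ∫ a, F1 a * |fb' a| ∂μ ≤
      (∫ y in (0:ℝ)..1, f y ^ (2 * k - 2 * β)) ^ ((1:ℝ)/2) *
      (∫ y in (0:ℝ)..1, (fb' y) ^ 2) ^ ((1:ℝ)/2) := by
    rw [← eqA, ← eqB]
    convert hold using 3
  have hfinal : ∫ y in (0:ℝ)..1, |h y| ≤ k / β *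
      (∫ y in (0:ℝ)..1, f y ^ (2 * k - 2 * β)) ^ ((1:ℝ)/2) *
      (∫ y in (0:ℝ)..1, (fb' y) ^ 2) ^ ((1:ℝ)/2) := by
    rw [eqL, mul_assoc]
    exact mul_le_mul_of_nonneg_left h20 hkb0.le
  have e0 : F 0 = f 0 ^ k := hFeq 0 ⟨le_rfl, zero_le_one⟩
  have ex : F x = f x ^ k := hFeq x hx
  linarith [step1, ftc, hfinal]
end
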